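/- For every open neighborhood N of the north pole (0,1) in S², there exist distinct points a, b ∈ N with q(a) = q(b); consequently, the quotient map q : S² → X is not a local homeomorphism. -/

import Mathlib

/-! The reflection `(c, z) ↦ (-c, z)` fixes the north pole, and for `c ≠ 0 ≠ z` it sends a point to
a different point of the same `q`-fibre. Such points accumulate at the north pole (along the
meridian `t ↦ (sin t, cos t)`), so every neighbourhood of the pole contains a pair `(c, z) ≠ (-c, z)` glued
by `q`; in particular `q` is not even locally injective there. -/

noncomputable section

/-- The 2-sphere, realized as the unit sphere `{(c,z) : |c|² + z² = 1}` in `ℂ × ℝ`,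
with the subspace topology. -/
def TwoSphere : Set (ℂ × ℝ) := {p | ‖p.1‖ ^ 2 + p.2 ^ 2 = 1}

/-- The relation `r₀` on `S²`: `r₀ (c,z) (c',z')` iff `z ≠ 0`, `c' = -c` and `z' = z`. -/
def sphRel (a b : TwoSphere) : Prop :=
  a.1.2 ≠ 0 ∧ b.1.1 = -a.1.1 ∧ b.1.2 = a.1.2

/-- The twisted sphere `X`: the quotient of `S²` by the equivalence relation generated
by `r₀`, with the quotient topology. -/
abbrev TwistedSphere : Type := Quot (Relation.EqvGen sphRel)

/-- The quotient map `q : S² → X`. -/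
abbrev sphQ : TwoSphere → TwistedSphere := Quot.mk (Relation.EqvGen sphRel)

/-- The north pole `(0,1)` of `S²`. -/
def northPole : TwoSphere := ⟨((0 : ℂ), (1 : ℝ)), by simp [TwoSphere]⟩

open Filter Topology Real

def sphNeg (p : TwoSphere) : TwoSphere :=
  ⟨(-p.1.1, p.1.2), by simpa [TwoSphere] using p.2⟩

lemma continuous_sphNeg : Continuous sphNeg := by
  unfold sphNeg; fun_prop

lemma sphNeg_northPole : sphNeg northPole = northPole := by
  simp [sphNeg, northPole]

lemma sphQ_sphNeg {p : TwoSphere} (hp : p.1.2 ≠ 0) : sphQ (sphNeg p) = sphQ p :=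
  (Quot.sound (.rel _ _ ⟨hp, rfl, rfl⟩)).symm

lemma sphNeg_ne {p : TwoSphere} (hp : p.1.1 ≠ 0) : sphNeg p ≠ p := fun h =>
  hp ((neg_eq_self ..).mp (congrArg (fun p : TwoSphere => p.1.1) h))

def sphMeridian (t : ℝ) : TwoSphere :=
  ⟨((sin t : ℂ), cos t), by
    show ‖(sin t : ℂ)‖ ^ 2 + cos t ^ 2 = 1
    rw [Complex.norm_real, norm_eq_abs, sq_abs, sin_sq_add_cos_sq]⟩

lemma continuous_sphMeridian : Continuous sphMeridian := by
  unfold sphMeridian; fun_prop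

lemma sphMeridian_zero : sphMeridian 0 = northPole := by
  simp [sphMeridian, northPole]

lemma frequently_sphNeg_ne_and_sphQ_eq :
    ∃ᶠ p in 𝓝 northPole, sphNeg p ≠ p ∧ sphQ (sphNeg p) = sphQ p := by
  have hlim : Tendsto sphMeridian (𝓝[>] 0) (𝓝 northPole) :=
    sphMeridian_zero ▸ (continuous_sphMeridian.tendsto 0).mono_left nhdsWithin_le_nhds
  refine hlim.frequently (Eventually.frequently ?_)
  filter_upwards [Ioo_mem_nhdsGT (by positivity : (0 : ℝ) < π / 2)] with t ⟨ht₀, htπ⟩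
  have hsin : sin t ≠ 0 := (sin_pos_of_pos_of_lt_pi ht₀ (by linarith [pi_pos])).ne'
  have hcos : cos t ≠ 0 := (cos_pos_of_mem_Ioo ⟨by linarith [pi_pos], htπ⟩).ne'
  exact ⟨sphNeg_ne (Complex.ofReal_ne_zero.mpr hsin), sphQ_sphNeg hcos⟩

lemma exists_ne_sphQ_eq_of_mem_nhds {N : Set TwoSphere} (hN : N ∈ 𝓝 northPole) :
    ∃ a b : TwoSphere, a ∈ N ∧ b ∈ N ∧ a ≠ b ∧ sphQ a = sphQ b := by
  have hN' : N ∩ sphNeg ⁻¹' N ∈ 𝓝 northPole :=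
    inter_mem hN (continuous_sphNeg.continuousAt.preimage_mem_nhds (by rwa [sphNeg_northPole]))
  obtain ⟨p, ⟨hp, hnp⟩, hne, hq⟩ := frequently_iff.mp frequently_sphNeg_ne_and_sphQ_eq hN'
  exact ⟨sphNeg p, p, hnp, hp, hne, hq⟩

theorem stmt_8 :
    (∀ N : Set TwoSphere, IsOpen N → northPole ∈ N →
      ∃ a b : TwoSphere, a ∈ N ∧ b ∈ N ∧ a ≠ b ∧ sphQ a = sphQ b) ∧
    ¬ IsLocalHomeomorph sphQ := by
  refine ⟨fun N hN hx => exists_ne_sphQ_eq_of_mem_nhds (hN.mem_nhds hx), fun hloc => ?_⟩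
  obtain ⟨U, hU, hx, hinj⟩ := hloc.isLocallyInjective northPole
  obtain ⟨a, b, ha, hb, hab, hq⟩ := exists_ne_sphQ_eq_of_mem_nhds (hU.mem_nhds hx)
  exact hab (hinj ha hb hq)
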